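/- For m ≥ 2 and n ≥ 0, as an identity in the ring ℤ[z, z^{-1}] (Laurent polynomials), (1-z)·z^n·Σ_{k∈ℤ} C(n,⌊(n+k)/m⌋) z^k = (1-z^m)(1+z^m)^n, i.e., Σ_{k∈ℤ} C(n, floor((n+k)/m))·z^k equals ((1-z^m)/(1-z))·((1+z^m)/z)^n. -/

import Mathlib

/-- Binomial coefficient `C(n, m)` with an integer lower index, defined to be `0` when `m < 0`
(and automatically `0` when `m > n`). -/
def intChoose (n : ℕ) (m : ℤ) : ℤ := if 0 ≤ m then (n.choose m.toNat : ℤ) else 0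

open Finset

lemma aux_add_pow (x : LaurentPolynomial ℤ) (n : ℕ) :
    (1 + x) ^ n = ∑ j ∈ range (n+1), (n.choose j : LaurentPolynomial ℤ) * x ^ j := by
  rw [add_comm, add_pow]
  simp [mul_comm]

open LaurentPolynomial in
/-- In `ℤ[z,z⁻¹]`: `(1-z)·zⁿ·Σ_{k∈ℤ} C(n,⌊(n+k)/m⌋) z^k = (1-z^m)(1+z^m)^n`. -/
theorem a_n_one_closed_form (m n : ℕ) (hm : 2 ≤ m) :
    (1 - T 1) * T (n : ℤ) *
        (∑ᶠ k : ℤ, LaurentPolynomial.C (intChoose n (Int.fdiv ((n : ℤ) + k) m)) * T k) =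
      (1 - T (m : ℤ)) * (1 + T (m : ℤ)) ^ n := by
  have hm0 : (0:ℤ) < (m:ℤ) := by positivity
  set f : ℤ → ℤ[T;T⁻¹] :=
    fun k => LaurentPolynomial.C (intChoose n (Int.fdiv ((n : ℤ) + k) m)) * T k with hf
  have hsupp : Function.support f ⊆ ↑(Finset.Icc (-(n:ℤ)) ((m:ℤ)*(n+1) - 1 - n)) := by
    intro k hk
    simp only [Finset.coe_Icc, Set.mem_Icc]
    by_contra hc
    push_neg at hc
    apply hk
    have h0 : intChoose n (Int.fdiv ((n : ℤ) + k) m) = 0 := by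
      rw [Int.fdiv_eq_ediv_of_nonneg _ (le_of_lt hm0)]
      rcases le_or_gt (-(n:ℤ)) k with h1 | h1
      · have h2 := hc h1
        have h3 : ((n:ℤ)+1) * m ≤ (n:ℤ)+k := by linarith
        have h4 : (n:ℤ)+1 ≤ ((n:ℤ)+k) / m := (Int.le_ediv_iff_mul_le hm0).mpr h3
        have h5 : (0:ℤ) ≤ ((n:ℤ)+k) / m := by linarith
        unfold intChoose
        rw [if_pos h5]
        have h6 : n < (((n:ℤ)+k) / m).toNat := by omega
        simp [Nat.choose_eq_zero_of_lt h6]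
      · have h2 : ((n:ℤ)+k) / m < 0 := Int.ediv_neg_of_neg_of_pos (by linarith) hm0
        unfold intChoose
        rw [if_neg (by omega)]
    simp [hf, h0]
  rw [finsum_eq_finset_sum_of_support_subset f hsupp]
  have key : ∑ k ∈ Finset.Icc (-(n:ℤ)) ((m:ℤ)*(n+1) - 1 - n), f k
      = ∑ p ∈ (range (n+1)) ×ˢ (range m),
          ((n.choose p.1 : ℤ[T;T⁻¹]) * (T (m:ℤ)) ^ p.1 * T (p.2:ℤ) * T (-(n:ℤ))) := by
    symm
    refine Finset.sum_nbij' (i := fun (p : ℕ×ℕ) => ((m:ℤ)*p.1 + p.2 - n))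
      (j := fun k => (((((n:ℤ)+k) / m)).toNat, ((((n:ℤ)+k) % m)).toNat))
      ?_ ?_ ?_ ?_ ?_
    · rintro ⟨j, r⟩ hp
      simp only [mem_product, mem_range] at hp
      simp only [Finset.mem_Icc]
      constructor
      · have : (0:ℤ) ≤ (m:ℤ)*j + r := by positivity
        linarith
      · have h1 : (j:ℤ) ≤ n := by exact_mod_cast Nat.lt_succ_iff.mp hp.1
        have h2 : (r:ℤ) < m := by exact_mod_cast hp.2
        nlinarith
    · intro k hk
      simp only [Finset.mem_Icc] at hk
      have hnk : (0:ℤ) ≤ (n:ℤ) + k := by linarith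
      have hdiv0 : (0:ℤ) ≤ ((n:ℤ)+k) / m := Int.ediv_nonneg hnk (le_of_lt hm0)
      have hlt : ((n:ℤ)+k) / m < (n:ℤ)+1 := by
        rw [Int.ediv_lt_iff_lt_mul hm0]; linarith
      have hmod0 : (0:ℤ) ≤ ((n:ℤ)+k) % m := Int.emod_nonneg _ (by omega)
      have hmodlt : ((n:ℤ)+k) % m < m := Int.emod_lt_of_pos _ hm0
      simp only [mem_product, mem_range]
      omega
    · rintro ⟨j, r⟩ hp
      simp only [mem_product, mem_range] at hp
      have h1 : (n:ℤ) + ((m:ℤ)*j + r - n) = (r:ℤ) + (m:ℤ)*j := by ring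
      have h2 : ((r:ℤ) + (m:ℤ)*j) / m = j := by
        rw [Int.add_mul_ediv_left _ _ (by omega),
          Int.ediv_eq_zero_of_lt (by positivity) (by exact_mod_cast hp.2), zero_add]
      have h3 : ((r:ℤ) + (m:ℤ)*j) % m = r := by
        rw [Int.add_mul_emod_self_left]
        exact Int.emod_eq_of_lt (by positivity) (by exact_mod_cast hp.2)
      simp [h1, h2, h3]
    · intro k hk
      simp only [Finset.mem_Icc] at hk
      have hnk : (0:ℤ) ≤ (n:ℤ) + k := by linarith
      have hdiv0 : (0:ℤ) ≤ ((n:ℤ)+k) / m := Int.ediv_nonneg hnk (le_of_lt hm0)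
      have hmod0 : (0:ℤ) ≤ ((n:ℤ)+k) % m := Int.emod_nonneg _ (by omega)
      have heq := Int.mul_ediv_add_emod ((n:ℤ)+k) m
      simp only
      rw [Int.toNat_of_nonneg hdiv0, Int.toNat_of_nonneg hmod0]
      linarith
    · rintro ⟨j, r⟩ hp
      simp only [mem_product, mem_range] at hp
      have h1 : (n:ℤ) + ((m:ℤ)*j + r - n) = (r:ℤ) + (m:ℤ)*j := by ring
      have h2 : Int.fdiv ((n:ℤ) + ((m:ℤ)*j + r - n)) m = j := by
        rw [Int.fdiv_eq_ediv_of_nonneg _ (le_of_lt hm0), h1,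
          Int.add_mul_ediv_left _ _ (by omega),
          Int.ediv_eq_zero_of_lt (by positivity) (by exact_mod_cast hp.2), zero_add]
      have h3 : intChoose n (j:ℤ) = ((n.choose j : ℕ) : ℤ) := by
        unfold intChoose; rw [if_pos (by positivity)]; simp
      simp only [hf, h2, h3, map_natCast]
      rw [T_pow, show ((m:ℤ)*j + r - n) = (j:ℤ) * m + r + (-(n:ℤ)) by ring,
        T_add, T_add]
      ring
  rw [key]
  have hB : ∀ x : ℤ[T;T⁻¹], (1 - x) * ∑ i ∈ range m, x ^ i = 1 - x ^ m := by
    intro x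
    have := geom_sum_mul x m
    linear_combination -this
  have hsum : ∑ p ∈ (range (n+1)) ×ˢ (range m),
      ((n.choose p.1 : ℤ[T;T⁻¹]) * (T (m:ℤ)) ^ p.1 * T (p.2:ℤ) * T (-(n:ℤ)))
      = ((∑ j ∈ range (n+1), (n.choose j : ℤ[T;T⁻¹]) * (T (m:ℤ)) ^ j)
        * (∑ r ∈ range m, T (r:ℤ))) * T (-(n:ℤ)) := by
    simp only [Finset.sum_product, Finset.sum_mul, Finset.mul_sum]
    exact Finset.sum_comm
  rw [hsum]
  have hA : (∑ j ∈ range (n+1), (n.choose j : ℤ[T;T⁻¹]) * (T (m:ℤ)) ^ j)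
      = (1 + T (m:ℤ)) ^ n := (aux_add_pow _ _).symm
  have hr : ∀ r : ℕ, (T (r:ℤ) : ℤ[T;T⁻¹]) = (T 1) ^ r := by
    intro r; rw [T_pow, mul_one]
  have hgeom : (1 - T 1) * (∑ r ∈ range m, (T (r:ℤ) : ℤ[T;T⁻¹])) = 1 - T (m:ℤ) := by
    simp_rw [hr]
    rw [hB, T_pow, mul_one]
  have hTn : (T (n:ℤ) : ℤ[T;T⁻¹]) * T (-(n:ℤ)) = 1 := by
    rw [← T_add, add_neg_cancel, T_zero]
  calc (1 - T 1) * T (n:ℤ) *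
      (((∑ j ∈ range (n+1), (n.choose j : ℤ[T;T⁻¹]) * (T (m:ℤ)) ^ j)
        * (∑ r ∈ range m, T (r:ℤ))) * T (-(n:ℤ)))
      = ((1 - T 1) * (∑ r ∈ range m, T (r:ℤ)))
        * (∑ j ∈ range (n+1), (n.choose j : ℤ[T;T⁻¹]) * (T (m:ℤ)) ^ j)
        * (T (n:ℤ) * T (-(n:ℤ))) := by ring
    _ = (1 - T (m:ℤ)) * (1 + T (m:ℤ)) ^ n := by rw [hgeom, hA, hTn, mul_one]
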